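/- Let u : ℝ⁴ → ℝ be smooth with coordinates (x¹, x², x³, x⁴). For λ define the vector fields X_i = ∂_{x^i} + (1/(u_i − λ))∂_{x^1} + (u_{1i}/(u_i − λ))∂_λ for i = 2, 3, 4 on ℝ⁵ (coordinates x¹,…,x⁴,λ), where u_i, u_{1i} denote partial derivatives. If u satisfies the three equations u_{ij} = (u_{1i} − u_{1j})/(u_i − u_j) for 2 ≤ i < j ≤ 4, then [X_i, X_j] = 0 for all i, j ∈ {2,3,4} and all λ avoiding u_i, u_j. -/

import Mathlib

/-- Partial derivative of a function on `ℝ⁴`. -/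
noncomputable def pd (u : (Fin 4 → ℝ) → ℝ) (i : Fin 4) (x : Fin 4 → ℝ) : ℝ :=
  fderiv ℝ u x (Pi.single i 1)

/-- Projection `ℝ⁵ → ℝ⁴` forgetting the spectral coordinate `λ` (index 4). -/
def proj (p : Fin 5 → ℝ) : Fin 4 → ℝ := fun i => p (Fin.castSucc i)

/-- Lie bracket of vector fields on the extended space `ℝ⁵`. -/
noncomputable def bracket (X Y : (Fin 5 → ℝ) → (Fin 5 → ℝ)) (p : Fin 5 → ℝ) : Fin 5 → ℝ :=
  fderiv ℝ Y p (X p) - fderiv ℝ X p (Y p)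

/-- The Lax vector field `X_i = ∂_{x^i} + (1/(u_i − λ))∂_{x^1} + (u_{1i}/(u_i − λ))∂_λ`
of the Adler–Shabat triple, on `ℝ⁵` with coordinates `x¹,…,x⁴,λ` (indices `0,…,3,4`). -/
noncomputable def lax (u : (Fin 4 → ℝ) → ℝ) (i : Fin 4) (p : Fin 5 → ℝ) : Fin 5 → ℝ :=
  (Pi.single (Fin.castSucc i) 1 : Fin 5 → ℝ)
    + (1 / (pd u i (proj p) - p 4)) • (Pi.single (0 : Fin 5) 1 : Fin 5 → ℝ)
    + (pd (pd u 0) i (proj p) / (pd u i (proj p) - p 4)) • (Pi.single (4 : Fin 5) 1 : Fin 5 → ℝ)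

/-! ### Auxiliary material -/

/-- The projection `proj` as a continuous linear map. -/
noncomputable def projL : (Fin 5 → ℝ) →L[ℝ] (Fin 4 → ℝ) :=
  ContinuousLinearMap.pi fun i => ContinuousLinearMap.proj (Fin.castSucc i)

lemma projL_coe : ⇑projL = proj := rfl

/-- Evaluation at the last coordinate as a continuous linear map. -/
noncomputable def ev4 : (Fin 5 → ℝ) →L[ℝ] ℝ := ContinuousLinearMap.proj 4

lemma ev4_coe : ⇑ev4 = fun p : Fin 5 → ℝ => p 4 := rfl

lemma contDiff_pd {u : (Fin 4 → ℝ) → ℝ} (hu : ContDiff ℝ (⊤ : ℕ∞) u) (k : Fin 4) :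
    ContDiff ℝ (⊤ : ℕ∞) (pd u k) := by
  have h := (ContinuousLinearMap.apply ℝ ℝ (Pi.single k (1:ℝ)) :
      ((Fin 4 → ℝ) →L[ℝ] ℝ) →L[ℝ] ℝ).contDiff.comp
      (hu.fderiv_right (by simp : ((⊤ : ℕ∞) : WithTop ℕ∞) + 1 ≤ ((⊤ : ℕ∞) : WithTop ℕ∞)))
  exact h

lemma differentiable_pd {u : (Fin 4 → ℝ) → ℝ} (hu : ContDiff ℝ (⊤ : ℕ∞) u) (k : Fin 4) :
    Differentiable ℝ (pd u k) := (contDiff_pd hu k).differentiable (by simp)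

/-- Symmetry of second partial derivatives (Schwarz). -/
lemma pd_comm {u : (Fin 4 → ℝ) → ℝ} (hu : ContDiff ℝ (⊤ : ℕ∞) u) (a b : Fin 4) :
    pd (pd u a) b = pd (pd u b) a := by
  funext x
  have hd : ∀ y, HasFDerivAt u (fderiv ℝ u y) y :=
    fun y => (hu.differentiable (by simp) y).hasFDerivAt
  have hD : HasFDerivAt (fderiv ℝ u) (fderiv ℝ (fderiv ℝ u) x) x :=
    (((hu.fderiv_right (by simp : ((⊤ : ℕ∞) : WithTop ℕ∞) + 1 ≤ ((⊤ : ℕ∞) : WithTop ℕ∞))).differentiable (by simp)) x).hasFDerivAt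
  have key : ∀ a : Fin 4, ∀ b : Fin 4, pd (pd u a) b x
      = fderiv ℝ (fderiv ℝ u) x (Pi.single b 1) (Pi.single a 1) := by
    intro a b
    have h1 : HasFDerivAt (fun y => fderiv ℝ u y (Pi.single a 1))
        ((ContinuousLinearMap.apply ℝ ℝ (Pi.single a 1)).comp (fderiv ℝ (fderiv ℝ u) x)) x := by
      have h := ((ContinuousLinearMap.apply ℝ ℝ (Pi.single a (1:ℝ)) :
        ((Fin 4 → ℝ) →L[ℝ] ℝ) →L[ℝ] ℝ)).hasFDerivAt.comp x hD
      exact h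
    show fderiv ℝ (fun y => fderiv ℝ u y (Pi.single a 1)) x (Pi.single b 1) = _
    rw [h1.fderiv]; rfl
  rw [key, key, second_derivative_symmetric hd hD]

lemma pd_sub {f g : (Fin 4 → ℝ) → ℝ} (hf : Differentiable ℝ f) (hg : Differentiable ℝ g)
    (k : Fin 4) (x : Fin 4 → ℝ) :
    pd (fun y => f y - g y) k x = pd f k x - pd g k x := by
  unfold pd
  rw [fderiv_fun_sub (hf x) (hg x)]; rfl

lemma pd_mul {f g : (Fin 4 → ℝ) → ℝ} (hf : Differentiable ℝ f) (hg : Differentiable ℝ g)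
    (k : Fin 4) (x : Fin 4 → ℝ) :
    pd (fun y => f y * g y) k x = f x * pd g k x + g x * pd f k x := by
  unfold pd
  rw [fderiv_fun_mul (hf x) (hg x)]; rfl

lemma fderiv_single' {f : (Fin 4 → ℝ) → ℝ} (x : Fin 4 → ℝ) (k : Fin 4) :
    fderiv ℝ f x (Pi.single k 1) = pd f k x := rfl

lemma proj_single (k : Fin 4) : proj (Pi.single (Fin.castSucc k) (1:ℝ)) = Pi.single k 1 := by
  funext m
  simp only [proj, Pi.single_apply, Fin.castSucc_inj]

lemma castSucc_ne_four (m : Fin 4) : Fin.castSucc m ≠ (4 : Fin 5) := by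
  intro h
  have := congrArg Fin.val h
  simp [Fin.castSucc, Fin.castAdd, Fin.castLE] at this
  omega

lemma proj_single_zero : proj (Pi.single (0 : Fin 5) (1:ℝ)) = Pi.single (0 : Fin 4) 1 := by
  have h : (0 : Fin 5) = Fin.castSucc (0 : Fin 4) := rfl
  rw [h, proj_single]

lemma proj_single_four : proj (Pi.single (4 : Fin 5) (1:ℝ)) = 0 := by
  funext m
  simp [proj, Pi.single_apply, castSucc_ne_four m]

lemma single_castSucc_four (k : Fin 4) :
    (Pi.single (Fin.castSucc k) (1:ℝ) : Fin 5 → ℝ) (4 : Fin 5) = 0 := by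
  simp [Pi.single_apply, (castSucc_ne_four k).symm]

lemma single_zero_four : (Pi.single (0 : Fin 5) (1:ℝ) : Fin 5 → ℝ) (4 : Fin 5) = 0 := by
  simp [Pi.single_apply]

lemma single_four_four : (Pi.single (4 : Fin 5) (1:ℝ) : Fin 5 → ℝ) (4 : Fin 5) = 1 := by simp

lemma hasFDerivAt_h {u : (Fin 4 → ℝ) → ℝ} (hu : ContDiff ℝ (⊤ : ℕ∞) u) (k : Fin 4) (p : Fin 5 → ℝ) :
    HasFDerivAt (fun q => pd u k (proj q) - q 4)
      ((fderiv ℝ (pd u k) (proj p)).comp projL - ev4) p := by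
  have h1 : HasFDerivAt (fun q : Fin 5 → ℝ => pd u k (proj q))
      ((fderiv ℝ (pd u k) (proj p)).comp projL) p := by
    have h := ((differentiable_pd hu k (proj p)).hasFDerivAt).comp p projL.hasFDerivAt
    exact h
  exact h1.sub ev4.hasFDerivAt

/-- The derivative of the Lax vector field. -/
lemma lax_hasFDerivAt {u : (Fin 4 → ℝ) → ℝ} (hu : ContDiff ℝ (⊤ : ℕ∞) u) (k : Fin 4)
    (p : Fin 5 → ℝ) (hp : pd u k (proj p) - p 4 ≠ 0) :
    HasFDerivAt (lax u k)
      (((-(((pd u k (proj p) - p 4) ^ 2)⁻¹)) •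
          ((fderiv ℝ (pd u k) (proj p)).comp projL - ev4)).smulRight (Pi.single (0:Fin 5) 1)
        + ((pd (pd u 0) k (proj p)) • ((-(((pd u k (proj p) - p 4) ^ 2)⁻¹)) •
              ((fderiv ℝ (pd u k) (proj p)).comp projL - ev4))
            + (pd u k (proj p) - p 4)⁻¹ •
              ((fderiv ℝ (pd (pd u 0) k) (proj p)).comp projL)).smulRight
          (Pi.single (4:Fin 5) 1)) p := by
  have hh := hasFDerivAt_h hu k p
  have hinv : HasFDerivAt (fun q => (pd u k (proj q) - q 4)⁻¹)
      ((-(((pd u k (proj p) - p 4) ^ 2)⁻¹)) •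
        ((fderiv ℝ (pd u k) (proj p)).comp projL - ev4)) p := by
    have h := (hasFDerivAt_inv' (𝕜 := ℝ) (x := pd u k (proj p) - p 4) hp).comp p hh
    refine h.congr_fderiv ?_
    ext v
    simp only [ContinuousLinearMap.smul_apply, ContinuousLinearMap.coe_comp',
      Function.comp_apply, ContinuousLinearMap.neg_apply,
      ContinuousLinearMap.mulLeftRight_apply, smul_eq_mul, neg_smul, neg_inj]
    rw [sq, mul_inv]
    ring
  have hb : HasFDerivAt (fun q : Fin 5 → ℝ => pd (pd u 0) k (proj q))
      ((fderiv ℝ (pd (pd u 0) k) (proj p)).comp projL) p := by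
    have h := ((differentiable_pd (contDiff_pd hu 0) k (proj p)).hasFDerivAt).comp p
      projL.hasFDerivAt
    exact h
  have hg := hb.mul hinv
  have hlax : lax u k = fun q =>
      (Pi.single (Fin.castSucc k) 1 : Fin 5 → ℝ)
      + ((pd u k (proj q) - q 4)⁻¹ • (Pi.single (0 : Fin 5) 1 : Fin 5 → ℝ)
      + (pd (pd u 0) k (proj q) * (pd u k (proj q) - q 4)⁻¹) •
          (Pi.single (4 : Fin 5) 1 : Fin 5 → ℝ)) := by
    funext q
    simp [lax, one_div, div_eq_mul_inv, add_assoc]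
  rw [hlax]
  exact ((hinv.smul_const _).add (hg.smul_const _)).const_add _

private lemma aux1 (A B C bi bj : ℝ) (hA : A ≠ 0) (hB : B ≠ 0)
    (hR1 : (A - B) * C = bi - bj) :
    -(B ^ 2)⁻¹ * (C + 1 / A * bj - bi / A) = -(A ^ 2)⁻¹ * (C + 1 / B * bi - bj / B) := by
  field_simp
  linear_combination (-(A + B)) * hR1

private lemma aux2 (A B C bi bj M ei ej : ℝ) (hA : A ≠ 0) (hB : B ≠ 0)
    (hR1 : (A - B) * C = bi - bj)
    (hR2 : (A - B) * M + C * (bi - bj) = ei - ej) :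
    bj * (-(B ^ 2)⁻¹ * (C + 1 / A * bj - bi / A)) + B⁻¹ * (M + 1 / A * ej)
      = bi * (-(A ^ 2)⁻¹ * (C + 1 / B * bi - bj / B)) + A⁻¹ * (M + 1 / B * ei) := by
  field_simp
  linear_combination A*B*hR2 - (bi*B + bj*A)*hR1

/-- Dispersionless Lax representation of the Adler–Shabat consistent triple: if a smooth
`u : ℝ⁴ → ℝ` satisfies `(u_i − u_j) u_{ij} = u_{1i} − u_{1j}` for the three pairs
`2 ≤ i < j ≤ 4`, then the Lax fields commute, `[X_i, X_j] = 0`, at every point of the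
extended space whose `λ`-coordinate avoids `u_i` and `u_j`. -/
theorem adler_shabat_lax (u : (Fin 4 → ℝ) → ℝ) (hu : ContDiff ℝ (⊤ : ℕ∞) u)
    (hPDE : ∀ i j : Fin 4, i ≠ 0 → j ≠ 0 → i ≠ j → ∀ x : Fin 4 → ℝ,
      (pd u i x - pd u j x) * pd (pd u i) j x = pd (pd u 0) i x - pd (pd u 0) j x)
    (i j : Fin 4) (hi : i ≠ 0) (hj : j ≠ 0)
    (p : Fin 5 → ℝ) (hpi : p 4 ≠ pd u i (proj p)) (hpj : p 4 ≠ pd u j (proj p)) :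
    bracket (lax u i) (lax u j) p = 0 := by
  by_cases hij : i = j
  · subst hij; simp [bracket]
  have hA : pd u i (proj p) - p 4 ≠ 0 := sub_ne_zero.mpr (Ne.symm hpi)
  have hB : pd u j (proj p) - p 4 ≠ 0 := sub_ne_zero.mpr (Ne.symm hpj)
  have HFi := lax_hasFDerivAt hu i p hA
  have HFj := lax_hasFDerivAt hu j p hB
  -- projections of the Lax fields
  have hproj_i : projL (lax u i p) =
      (Pi.single i (1:ℝ) : Fin 4 → ℝ)
        + (1 / (pd u i (proj p) - p 4)) • (Pi.single (0 : Fin 4) (1:ℝ) : Fin 4 → ℝ) := by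
    rw [projL_coe]
    show proj ((Pi.single (Fin.castSucc i) (1:ℝ) : Fin 5 → ℝ)
        + (1 / (pd u i (proj p) - p 4)) • (Pi.single (0:Fin 5) (1:ℝ) : Fin 5 → ℝ)
        + (pd (pd u 0) i (proj p) / (pd u i (proj p) - p 4)) •
            (Pi.single (4:Fin 5) (1:ℝ) : Fin 5 → ℝ)) = _
    have : ∀ a b c : Fin 5 → ℝ, ∀ s t : ℝ, proj (a + s • b + t • c)
        = proj a + s • proj b + t • proj c := fun _ _ _ _ _ => rfl
    rw [this, proj_single, proj_single_zero, proj_single_four, smul_zero, add_zero]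
  have hproj_j : projL (lax u j p) =
      (Pi.single j (1:ℝ) : Fin 4 → ℝ)
        + (1 / (pd u j (proj p) - p 4)) • (Pi.single (0 : Fin 4) (1:ℝ) : Fin 4 → ℝ) := by
    rw [projL_coe]
    show proj ((Pi.single (Fin.castSucc j) (1:ℝ) : Fin 5 → ℝ)
        + (1 / (pd u j (proj p) - p 4)) • (Pi.single (0:Fin 5) (1:ℝ) : Fin 5 → ℝ)
        + (pd (pd u 0) j (proj p) / (pd u j (proj p) - p 4)) •
            (Pi.single (4:Fin 5) (1:ℝ) : Fin 5 → ℝ)) = _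
    have : ∀ a b c : Fin 5 → ℝ, ∀ s t : ℝ, proj (a + s • b + t • c)
        = proj a + s • proj b + t • proj c := fun _ _ _ _ _ => rfl
    rw [this, proj_single, proj_single_zero, proj_single_four, smul_zero, add_zero]
  have hev_i : ev4 (lax u i p) = pd (pd u 0) i (proj p) / (pd u i (proj p) - p 4) := by
    rw [ev4_coe]
    show ((Pi.single (Fin.castSucc i) (1:ℝ) : Fin 5 → ℝ)
        + (1 / (pd u i (proj p) - p 4)) • (Pi.single (0:Fin 5) (1:ℝ) : Fin 5 → ℝ)
        + (pd (pd u 0) i (proj p) / (pd u i (proj p) - p 4)) •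
            (Pi.single (4:Fin 5) (1:ℝ) : Fin 5 → ℝ)) 4 = _
    simp [single_castSucc_four, single_zero_four, single_four_four]
  have hev_j : ev4 (lax u j p) = pd (pd u 0) j (proj p) / (pd u j (proj p) - p 4) := by
    rw [ev4_coe]
    show ((Pi.single (Fin.castSucc j) (1:ℝ) : Fin 5 → ℝ)
        + (1 / (pd u j (proj p) - p 4)) • (Pi.single (0:Fin 5) (1:ℝ) : Fin 5 → ℝ)
        + (pd (pd u 0) j (proj p) / (pd u j (proj p) - p 4)) •
            (Pi.single (4:Fin 5) (1:ℝ) : Fin 5 → ℝ)) 4 = _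
    simp [single_castSucc_four, single_zero_four, single_four_four]
  -- evaluate the applied second derivatives
  have eFj : fderiv ℝ (pd u j) (proj p) (projL (lax u i p))
      = pd (pd u j) i (proj p)
        + (1 / (pd u i (proj p) - p 4)) * pd (pd u j) 0 (proj p) := by
    rw [hproj_i, map_add, map_smul, fderiv_single', fderiv_single']; rfl
  have eFi : fderiv ℝ (pd u i) (proj p) (projL (lax u j p))
      = pd (pd u i) j (proj p)
        + (1 / (pd u j (proj p) - p 4)) * pd (pd u i) 0 (proj p) := by
    rw [hproj_j, map_add, map_smul, fderiv_single', fderiv_single']; rfl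
  have eGj : fderiv ℝ (pd (pd u 0) j) (proj p) (projL (lax u i p))
      = pd (pd (pd u 0) j) i (proj p)
        + (1 / (pd u i (proj p) - p 4)) * pd (pd (pd u 0) j) 0 (proj p) := by
    rw [hproj_i, map_add, map_smul, fderiv_single', fderiv_single']; rfl
  have eGi : fderiv ℝ (pd (pd u 0) i) (proj p) (projL (lax u j p))
      = pd (pd (pd u 0) i) j (proj p)
        + (1 / (pd u j (proj p) - p 4)) * pd (pd (pd u 0) i) 0 (proj p) := by
    rw [hproj_j, map_add, map_smul, fderiv_single', fderiv_single']; rfl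
  -- Schwarz symmetry rewrites
  have sji : pd (pd u j) i = pd (pd u i) j := pd_comm hu j i
  have sj0 : pd (pd u j) 0 = pd (pd u 0) j := pd_comm hu j 0
  have si0 : pd (pd u i) 0 = pd (pd u 0) i := pd_comm hu i 0
  have sGji : pd (pd (pd u 0) j) i = pd (pd (pd u 0) i) j := pd_comm (contDiff_pd hu 0) j i
  -- the PDE and its derivative in the `x¹` direction
  have hR1 : (pd u i (proj p) - pd u j (proj p)) * pd (pd u i) j (proj p)
      = pd (pd u 0) i (proj p) - pd (pd u 0) j (proj p) := hPDE i j hi hj hij (proj p)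
  have hfun : (fun y => (pd u i y - pd u j y) * pd (pd u i) j y)
      = fun y => pd (pd u 0) i y - pd (pd u 0) j y := funext (hPDE i j hi hj hij)
  have hdsub : Differentiable ℝ (fun y => pd u i y - pd u j y) :=
    (differentiable_pd hu i).sub (differentiable_pd hu j)
  have hdC : Differentiable ℝ (pd (pd u i) j) := differentiable_pd (contDiff_pd hu i) j
  have hq : pd (pd (pd u i) j) 0 = pd (pd (pd u 0) i) j := by
    rw [pd_comm (contDiff_pd hu i) j 0, si0]
  have hR2 : (pd u i (proj p) - pd u j (proj p)) * pd (pd (pd u 0) i) j (proj p)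
      + pd (pd u i) j (proj p) * (pd (pd u 0) i (proj p) - pd (pd u 0) j (proj p))
      = pd (pd (pd u 0) i) 0 (proj p) - pd (pd (pd u 0) j) 0 (proj p) := by
    have h : pd (fun y => (pd u i y - pd u j y) * pd (pd u i) j y) 0 (proj p)
        = pd (fun y => pd (pd u 0) i y - pd (pd u 0) j y) 0 (proj p) := by rw [hfun]
    rw [pd_mul hdsub hdC 0 (proj p),
      pd_sub (differentiable_pd hu i) (differentiable_pd hu j) 0 (proj p),
      pd_sub (differentiable_pd (contDiff_pd hu 0) i)
        (differentiable_pd (contDiff_pd hu 0) j) 0 (proj p)] at h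
    rw [hq, si0, sj0] at h
    linarith
  -- put everything together
  show fderiv ℝ (lax u j) p (lax u i p) - fderiv ℝ (lax u i) p (lax u j p) = 0
  rw [HFi.fderiv, HFj.fderiv]
  simp only [ContinuousLinearMap.add_apply, ContinuousLinearMap.smulRight_apply,
    ContinuousLinearMap.smul_apply, ContinuousLinearMap.sub_apply,
    ContinuousLinearMap.coe_comp', Function.comp_apply, smul_eq_mul]
  rw [eFj, eFi, eGj, eGi, hev_i, hev_j, sji, sj0, si0, sGji]
  have veq : ∀ s1 s2 t1 t2 : ℝ, s1 = t1 → s2 = t2 →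
      s1 • (Pi.single (0:Fin 5) (1:ℝ) : Fin 5 → ℝ)
        + s2 • (Pi.single (4:Fin 5) (1:ℝ) : Fin 5 → ℝ)
        - (t1 • (Pi.single (0:Fin 5) (1:ℝ) : Fin 5 → ℝ)
        + t2 • (Pi.single (4:Fin 5) (1:ℝ) : Fin 5 → ℝ)) = 0 := by
    rintro s1 s2 t1 t2 rfl rfl
    simp
  have hR1' : ((pd u i (proj p) - p 4) - (pd u j (proj p) - p 4)) * pd (pd u i) j (proj p)
      = pd (pd u 0) i (proj p) - pd (pd u 0) j (proj p) := by linear_combination hR1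
  have hR2' : ((pd u i (proj p) - p 4) - (pd u j (proj p) - p 4)) * pd (pd (pd u 0) i) j (proj p)
      + pd (pd u i) j (proj p) * (pd (pd u 0) i (proj p) - pd (pd u 0) j (proj p))
      = pd (pd (pd u 0) i) 0 (proj p) - pd (pd (pd u 0) j) 0 (proj p) := by
    linear_combination hR2
  exact veq _ _ _ _
    (aux1 _ _ _ _ _ hA hB hR1')
    (aux2 _ _ _ _ _ _ _ _ hA hB hR1' hR2')
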